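/- arXiv:2212.10643 — 2 statements merged into one kernel-verified Lean document; each statement's English description precedes it below -/
import Mathlib

section
/- Let G be a simple graph with maximum degree at most 4 containing pairwise adjacent vertices x, y, z, where x has degree exactly 3 with third neighbor x₁ ∉ {y, z}, and x₁ has degree exactly 3. Set S = {x, x₁}. If the S-reduced graph G*S admits a 2-PCF 9-coloring, then G admits a 2-PCF 9-coloring. -/
/-- An `h`-PCF coloring of `G`: a proper coloring `φ` such that for every vertex `v`,
at least `min h (d_G(v))` colors appear on exactly one neighbor of `v`. -/
def SimpleGraph.IsPCFColoring {V α : Type*} (G : SimpleGraph V) (h : ℕ)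
    (φ : V → α) : Prop :=
  (∀ ⦃u w : V⦄, G.Adj u w → φ u ≠ φ w) ∧
  ∀ v : V, min h {u | G.Adj v u}.ncard ≤
    {c : α | {u | G.Adj v u ∧ φ u = c}.ncard = 1}.ncard

/-- `G` admits an `h`-PCF `k`-coloring. -/
def SimpleGraph.HasPCFColoring {V : Type*} (G : SimpleGraph V) (h k : ℕ) : Prop :=
  ∃ φ : V → Fin k, G.IsPCFColoring h φ

/-- The `S`-reduced graph `G*S`: delete `S`, and join two distinct nonadjacent
vertices outside `S` that have a common neighbor in `S` (vertices of `S`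
remain as isolated vertices). -/
def SimpleGraph.reduce {V : Type*} (G : SimpleGraph V) (S : Set V) :
    SimpleGraph V where
  Adj u w := u ∉ S ∧ w ∉ S ∧ u ≠ w ∧
    (G.Adj u w ∨ ∃ s ∈ S, G.Adj u s ∧ G.Adj s w)
  symm := ⟨by
    rintro u w ⟨hu, hw, hne, h | ⟨s, hs, h1, h2⟩⟩
    · exact ⟨hw, hu, hne.symm, Or.inl h.symm⟩
    · exact ⟨hw, hu, hne.symm, Or.inr ⟨s, hs, h2.symm, h1.symm⟩⟩⟩
  loopless := ⟨fun u h => h.2.2.1 rfl⟩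

/-!
Keep the colouring `φ` of `G*S` outside `S = {x, x₁}` and give `x`, `x₁` new colours `c₀`, `c₁`.
A vertex with no neighbour in `S` sees exactly what it sees in `G*S`. For a neighbour `v` of `S`,
let `m` be the multiset of colours on its neighbours outside `S`; it has at most three elements,
and at least one of them is unique, because in `G*S` the vertex `v` sees `m` plus at most one more
colour (that of the other outer neighbour of its `S`-neighbour). Then `v` keeps two unique colours
as long as the new colour of its `S`-neighbour avoids a set of at most two colours.

Counting: `c₁` avoids `φ y, φ z, φ a, φ b` (where `N(x₁) = {x, a, b}`) and the sets of `a` and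
`b`, at most `8` colours; `c₀` avoids `φ a, φ b, c₁` and the sets of `y` and `z`, which already
absorb `φ z` and `φ y` because `y ~ z`, at most `7` colours.
-/

open Finset

lemma Set.injOn_insert_insert_pair {β α : Type*} {f : β → α} {p q r s : β} (hpq : f p ≠ f q)
    (hpr : f p ≠ f r) (hps : f p ≠ f s) (hqr : f q ≠ f r) (hqs : f q ≠ f s) (hrs : f r ≠ f s) :
    Set.InjOn f {p, q, r, s} := by
  intro a ha b hb hab
  simp only [Set.mem_insert_iff, Set.mem_singleton_iff] at ha hb
  rcases ha with rfl | rfl | rfl | rfl <;> rcases hb with rfl | rfl | rfl | rfl <;>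
    first | rfl | simp_all

namespace Finset

variable {β : Type*} [DecidableEq β] {s : Finset β} {a : β}

lemma exists_eq_pair_of_mem_of_card_eq_two (hs : #s = 2) (ha : a ∈ s) :
    ∃ b, a ≠ b ∧ s = {a, b} := by
  obtain ⟨b, hb⟩ := card_eq_one.mp (by rw [card_erase_of_mem ha, hs] : #(s.erase a) = 1)
  exact ⟨b, (ne_of_mem_erase (hb ▸ mem_singleton_self b)).symm, by rw [← insert_erase ha, hb]⟩

lemma exists_eq_triple_of_mem_of_card_eq_three (hs : #s = 3) (ha : a ∈ s) :
    ∃ b c, b ≠ c ∧ b ≠ a ∧ c ≠ a ∧ s = {a, b, c} := by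
  obtain ⟨b, c, hbc, hbc'⟩ := card_eq_two.mp (by rw [card_erase_of_mem ha, hs] : #(s.erase a) = 2)
  exact ⟨b, c, hbc, ne_of_mem_erase (show b ∈ s.erase a by simp [hbc']),
    ne_of_mem_erase (show c ∈ s.erase a by simp [hbc']), by rw [← insert_erase ha, hbc']⟩

end Finset

namespace Multiset

variable {α : Type*} [DecidableEq α]

def uniques (m : Multiset α) : Finset α := m.toFinset.filter (m.count · = 1)

/-- The `h`-PCF condition at a vertex whose neighbours carry the colours `m`. -/
def IsPCF (h : ℕ) (m : Multiset α) : Prop := min h (card m) ≤ #m.uniques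

/-- The colours to avoid when adding one colour to `m`; when `m` has three distinct colours, any
added colour leaves two of them unique. -/
def forbidden (m : Multiset α) : Finset α := if #m.toFinset ≤ 2 then m.toFinset else ∅

@[simp]
lemma mem_uniques {m : Multiset α} {c : α} : c ∈ m.uniques ↔ m.count c = 1 := by
  simp only [uniques, Finset.mem_filter, mem_toFinset, and_iff_right_iff_imp]
  intro h
  exact count_pos.mp (by omega)

lemma uniques_cons_subset (c : α) (m : Multiset α) :
    (c ::ₘ m).uniques ⊆ insert c m.uniques := by
  intro d hd
  rcases eq_or_ne d c with rfl | hdc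
  · exact Finset.mem_insert_self _ _
  · simpa [hdc] using hd

lemma uniques_cons_of_notMem {c : α} {m : Multiset α} (hc : c ∉ m) :
    (c ::ₘ m).uniques = insert c m.uniques := by
  ext d
  rcases eq_or_ne d c with rfl | hdc
  · simp [count_eq_zero.mpr hc]
  · simp [hdc]

lemma IsPCF.mono {h h' : ℕ} {m : Multiset α} (hh : h' ≤ h) (hm : m.IsPCF h) : m.IsPCF h' :=
  le_trans (min_le_min_right _ hh) hm

lemma IsPCF.of_cons {c : α} {m : Multiset α} (h : (c ::ₘ m).IsPCF 2) : m.IsPCF 1 := by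
  have := Finset.card_le_card (uniques_cons_subset c m)
  have := Finset.card_insert_le c m.uniques
  unfold IsPCF at *
  simp only [card_cons] at h
  omega

lemma isPCF_map_of_injOn {β : Type*} {f : β → α} {s : Finset β} (hf : Set.InjOn f s) (h : ℕ) :
    (s.val.map f).IsPCF h := by
  have hnd : (s.val.map f).Nodup := s.nodup.map_on fun a ha b hb => hf ha hb
  have : (s.val.map f).uniques = (s.val.map f).toFinset := by
    ext c
    simp only [mem_uniques, mem_toFinset]
    exact ⟨fun h => count_pos.mp (by omega), count_eq_one_of_mem hnd⟩
  rw [IsPCF, this, toFinset_card_of_nodup hnd]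
  exact min_le_right _ _

lemma card_forbidden_le (m : Multiset α) : #m.forbidden ≤ 2 := by
  unfold forbidden
  split_ifs with h
  exacts [h, by simp]

lemma card_insert_forbidden_le {c : α} {m : Multiset α} (hc : c ∈ m) :
    #(insert c m.forbidden) ≤ 2 := by
  unfold forbidden
  split_ifs with h
  · rwa [Finset.insert_eq_of_mem (mem_toFinset.mpr hc)]
  · simp

lemma IsPCF.cons_of_notMem_forbidden {c : α} {m : Multiset α} (hm : card m ≤ 3)
    (h : m.IsPCF 1) (hc : c ∉ m.forbidden) : (c ::ₘ m).IsPCF 2 := by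
  unfold forbidden at hc
  split_ifs at hc with hsupp
  · rw [mem_toFinset] at hc
    have hcu : c ∉ m.uniques := by simp [count_eq_zero.mpr hc]
    unfold IsPCF at *
    rw [uniques_cons_of_notMem hc, card_insert_of_notMem hcu, card_cons]
    omega
  · have hnd : m.Nodup := toFinset_card_eq_card_iff_nodup.mp (by
      have := toFinset_card_le m; omega)
    have hsub : m.toFinset.erase c ⊆ (c ::ₘ m).uniques := by
      intro d hd
      rw [Finset.mem_erase, mem_toFinset] at hd
      simp [hd.1, count_eq_one_of_mem hnd hd.2]
    have := Finset.card_le_card hsub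
    have := pred_card_le_card_erase (s := m.toFinset) (a := c)
    exact (min_le_left _ _).trans (by omega)

lemma isPCF_cons_cons_of_notMem_forbidden {a b : α} {m : Multiset α} (hm : card m ≤ 2)
    (hab : a ≠ b) (ha : a ∉ m.forbidden) (hb : b ∉ m.forbidden) : (a ::ₘ b ::ₘ m).IsPCF 2 := by
  have hforb : m.forbidden = m.toFinset := if_pos ((toFinset_card_le m).trans hm)
  rw [hforb, mem_toFinset] at ha hb
  have : ({a, b} : Finset α) ⊆ (a ::ₘ b ::ₘ m).uniques := by
    intro c hc
    rcases Finset.mem_insert.mp hc with rfl | hc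
    · simp [hab, count_eq_zero.mpr ha]
    · rw [Finset.mem_singleton.mp hc]
      simp [hab.symm, count_eq_zero.mpr hb]
  exact (min_le_left _ _).trans ((Finset.card_pair hab).symm.le.trans (Finset.card_le_card this))

variable [Fintype α]

lemma exists_notMem_union_forbidden (hα : 8 < Fintype.card α) (p q r s : α)
    (m n : Multiset α) : ∃ c, c ∉ {p, q, r, s} ∪ m.forbidden ∪ n.forbidden := by
  obtain ⟨c, -, hc⟩ := Finset.exists_mem_notMem_of_card_lt_card (t := Finset.univ)
    (s := {p, q, r, s} ∪ m.forbidden ∪ n.forbidden) (by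
      have := Finset.card_union_le ({p, q, r, s} ∪ m.forbidden) n.forbidden
      have := Finset.card_union_le {p, q, r, s} m.forbidden
      have := Finset.card_le_four (a := p) (b := q) (c := r) (d := s)
      have := card_forbidden_le m
      have := card_forbidden_le n
      rw [Finset.card_univ]
      omega)
  exact ⟨c, hc⟩

lemma exists_notMem_union_insert_forbidden (hα : 7 < Fintype.card α) (p q r : α)
    {m n : Multiset α} {u w : α} (hu : u ∈ m) (hw : w ∈ n) :
    ∃ c, c ∉ {p, q, r} ∪ insert u m.forbidden ∪ insert w n.forbidden := by
  obtain ⟨c, -, hc⟩ := Finset.exists_mem_notMem_of_card_lt_card (t := Finset.univ)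
    (s := {p, q, r} ∪ insert u m.forbidden ∪ insert w n.forbidden) (by
      have := Finset.card_union_le ({p, q, r} ∪ insert u m.forbidden) (insert w n.forbidden)
      have := Finset.card_union_le {p, q, r} (insert u m.forbidden)
      have := Finset.card_le_three (a := p) (b := q) (c := r)
      have := card_insert_forbidden_le hu
      have := card_insert_forbidden_le hw
      rw [Finset.card_univ]
      omega)
  exact ⟨c, hc⟩

end Multiset

namespace SimpleGraph

variable {V α : Type*}

def neighborColors (G : SimpleGraph V) (ψ : V → α) (v : V) [Fintype (G.neighborSet v)] :
    Multiset α :=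
  (G.neighborFinset v).val.map ψ

variable {G : SimpleGraph V}

lemma ncard_neighborSet (v : V) [Fintype (G.neighborSet v)] :
    (G.neighborSet v).ncard = G.degree v := by
  rw [← card_neighborFinset_eq_degree, ← Set.ncard_coe_finset, coe_neighborFinset]

lemma isPCFColoring_iff [DecidableEq α] [G.LocallyFinite] {h : ℕ} {ψ : V → α} :
    G.IsPCFColoring h ψ ↔
      (∀ ⦃u w⦄, G.Adj u w → ψ u ≠ ψ w) ∧ ∀ v, (G.neighborColors ψ v).IsPCF h := by
  refine and_congr Iff.rfl (forall_congr' fun v => ?_)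
  have hcount (c : α) :
      {u | G.Adj v u ∧ ψ u = c}.ncard = (G.neighborColors ψ v).count c := by
    rw [neighborColors, Multiset.count_map, ← Finset.filter_val, Finset.card_val,
      ← Set.ncard_coe_finset]
    congr 1
    ext u
    simp [eq_comm]
  have huniq : {c | {u | G.Adj v u ∧ ψ u = c}.ncard = 1} =
      ↑(G.neighborColors ψ v).uniques := by
    ext c
    simp [hcount]
  rw [huniq, Set.ncard_coe_finset, Multiset.IsPCF, neighborColors, Multiset.card_map,
    Finset.card_val, card_neighborFinset_eq_degree, ← ncard_neighborSet]
  rfl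

lemma reduce_adj_of_adj {S : Set V} {u w : V} (hu : u ∉ S) (hw : w ∉ S) (h : G.Adj u w) :
    (G.reduce S).Adj u w :=
  ⟨hu, hw, h.ne, Or.inl h⟩

lemma reduce_adj_of_adj_of_adj {S : Set V} {s u w : V} (hu : u ∉ S) (hw : w ∉ S) (huw : u ≠ w)
    (hs : s ∈ S) (hsu : G.Adj s u) (hsw : G.Adj s w) : (G.reduce S).Adj u w :=
  ⟨hu, hw, huw, Or.inr ⟨s, hs, hsu.symm, hsw⟩⟩

variable [Fintype V] [DecidableRel G.Adj]

lemma neighborFinset_reduce_of_forall_not_adj {S : Finset V} [DecidableRel (G.reduce S).Adj]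
    {v : V} (hv : v ∉ S) (hvS : ∀ s ∈ S, ¬G.Adj v s) :
    (G.reduce S).neighborFinset v = G.neighborFinset v := by
  ext w
  simp only [mem_neighborFinset]
  refine ⟨fun h => h.2.2.2.resolve_right ?_, fun h => reduce_adj_of_adj hv ?_ h⟩
  · rintro ⟨s, hs, hvs, -⟩
    exact hvS s hs hvs
  · exact fun hw => hvS w hw h

variable [DecidableEq V]

variable (G) in
def outerColors (S : Finset V) (φ : V → α) (v : V) : Multiset α :=
  ((G.neighborFinset v).filter (· ∉ S)).val.map φ

variable {S : Finset V}

lemma neighborColors_eq_add {φ ψ : V → α} (hψ : ∀ u ∉ S, ψ u = φ u) (v : V) :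
    G.neighborColors ψ v =
      ((G.neighborFinset v).filter (· ∈ S)).val.map ψ + G.outerColors S φ v := by
  rw [neighborColors, ← Multiset.filter_add_not (· ∈ S) (G.neighborFinset v).val,
    Multiset.map_add, Finset.filter_val, outerColors, Finset.filter_val]
  congr 1
  exact Multiset.map_congr rfl fun u hu => hψ u (Multiset.mem_filter.mp hu).2

lemma card_outerColors_add_card_filter_mem (φ : V → α) (v : V) :
    Multiset.card (G.outerColors S φ v) + #((G.neighborFinset v).filter (· ∈ S)) =
      G.degree v := by
  rw [outerColors, Multiset.card_map, Finset.card_val, add_comm,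
    Finset.card_filter_add_card_filter_not, card_neighborFinset_eq_degree]

lemma apply_mem_outerColors (φ : V → α) {v w : V} (h : G.Adj v w) (hw : w ∉ S) :
    φ w ∈ G.outerColors S φ v :=
  Multiset.mem_map_of_mem φ (by simp [h, hw])

lemma card_filter_notMem_eq_two {s s' p q : V} (hN : G.neighborFinset s = {s', p, q})
    (hs' : s' ∈ S) (hp : p ∉ S) (hq : q ∉ S) (hpq : p ≠ q) :
    #((G.neighborFinset s).filter (· ∉ S)) = 2 := by
  rw [hN, Finset.filter_insert, Finset.filter_insert, Finset.filter_singleton]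
  simp [hs', hp, hq, hpq]

variable [DecidableEq α]

lemma isPCF_neighborColors_of_filter_mem_eq_pair {φ ψ : V → α} {v s₁ s₂ : V}
    (hvS : (G.neighborFinset v).filter (· ∈ S) = {s₁, s₂}) (hs : s₁ ≠ s₂)
    (hdeg : G.degree v ≤ 4) (hψ : ∀ u ∉ S, ψ u = φ u) (hψs : ψ s₁ ≠ ψ s₂)
    (h₁ : ψ s₁ ∉ (G.outerColors S φ v).forbidden)
    (h₂ : ψ s₂ ∉ (G.outerColors S φ v).forbidden) :
    (G.neighborColors ψ v).IsPCF 2 := by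
  have hcard := card_outerColors_add_card_filter_mem (G := G) (S := S) φ v
  rw [hvS, Finset.card_pair hs] at hcard
  rw [neighborColors_eq_add hψ, hvS, Finset.insert_val_of_notMem (by simpa using hs)]
  simp only [Finset.singleton_val, Multiset.map_cons, Multiset.map_singleton, Multiset.cons_add,
    Multiset.singleton_add]
  exact Multiset.isPCF_cons_cons_of_notMem_forbidden (by omega) hψs h₁ h₂

lemma injOn_insert_neighborFinset {h : ℕ} {φ ψ : V → α} {s s' p q : V}
    (hφ : (G.reduce S).IsPCFColoring h φ) (hψ : ∀ u ∉ S, ψ u = φ u)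
    (hN : G.neighborFinset s = {s', p, q}) (hs : s ∈ S) (hp : p ∉ S) (hq : q ∉ S) (hpq : p ≠ q)
    (hψs : ψ s ∉ ({φ p, φ q, ψ s'} : Finset α)) (hψs' : ψ s' ∉ ({φ p, φ q} : Finset α)) :
    Set.InjOn ψ ↑(insert s (G.neighborFinset s)) := by
  have hadj {u : V} (hu : u ∈ ({s', p, q} : Finset V)) : G.Adj s u := by
    rwa [← hN, mem_neighborFinset] at hu
  have hφpq : φ p ≠ φ q := hφ.1 (reduce_adj_of_adj_of_adj hp hq hpq (Finset.mem_coe.mpr hs)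
    (hadj (by simp)) (hadj (by simp)))
  simp only [Finset.mem_insert, Finset.mem_singleton, not_or] at hψs hψs'
  rw [← hψ p hp, ← hψ q hq] at hψs hψs' hφpq
  rw [hN]
  push_cast
  exact Set.injOn_insert_insert_pair hψs.2.2 hψs.1 hψs.2.1 hψs'.1 hψs'.2 hφpq

variable [DecidableRel (G.reduce S).Adj]

lemma isPCF_neighborColors_of_filter_mem_eq_singleton {φ ψ : V → α} {v s t : V}
    (hφ : ((G.reduce S).neighborColors φ v).IsPCF 2) (hv : v ∉ S)
    (hvS : (G.neighborFinset v).filter (· ∈ S) = {s})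
    (hsS : (G.neighborFinset s).filter (· ∉ S) = {v, t}) (hvt : v ≠ t) (hdeg : G.degree v ≤ 4)
    (hψ : ∀ u ∉ S, ψ u = φ u) (hψs : ψ s ∉ (G.outerColors S φ v).forbidden) :
    (G.neighborColors ψ v).IsPCF 2 := by
  have hcard := card_outerColors_add_card_filter_mem (G := G) (S := S) φ v
  rw [hvS, Finset.card_singleton] at hcard
  have hvS' (s' : V) : s' ∈ S ∧ G.Adj v s' ↔ s' = s := by
    simpa [and_comm] using Finset.ext_iff.mp hvS s'
  have hsS' (w : V) : w ∉ S ∧ G.Adj s w ↔ w = v ∨ w = t := by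
    simpa [and_comm] using Finset.ext_iff.mp hsS w
  have hred : (G.reduce S).neighborFinset v =
      insert t ((G.neighborFinset v).filter (· ∉ S)) := by
    ext w
    simp only [mem_neighborFinset, Finset.mem_insert, Finset.mem_filter]
    constructor
    · rintro ⟨-, hw, hvw, hadj | ⟨s', hs', hvs', hs'w⟩⟩
      · exact Or.inr ⟨hadj, hw⟩
      · obtain rfl := (hvS' s').mp ⟨hs', hvs'⟩
        exact Or.inl (((hsS' w).mp ⟨hw, hs'w⟩).resolve_left hvw.symm)
    · rintro (rfl | ⟨hadj, hw⟩)
      · have ht := (hsS' w).mpr (Or.inr rfl)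
        exact reduce_adj_of_adj_of_adj hv ht.1 hvt (by simpa using ((hvS' s).mpr rfl).1)
          ((hvS' s).mpr rfl).2.symm ht.2
      · exact reduce_adj_of_adj hv (by simpa using hw) hadj
  have hO : (G.outerColors S φ v).IsPCF 1 := by
    rw [neighborColors, hred] at hφ
    by_cases htO : t ∈ (G.neighborFinset v).filter (· ∉ S)
    · rw [Finset.insert_eq_of_mem htO] at hφ
      exact hφ.mono one_le_two
    · rw [Finset.insert_val_of_notMem htO, Multiset.map_cons] at hφ
      exact hφ.of_cons
  rw [neighborColors_eq_add hψ, hvS, Finset.singleton_val, Multiset.map_singleton,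
    Multiset.singleton_add]
  exact hO.cons_of_notMem_forbidden (by omega) hψs

lemma isPCF_neighborColors_of_forall_notMem_forbidden {φ ψ : V → α} {v : V}
    (hφ : ((G.reduce S).neighborColors φ v).IsPCF 2)
    (hS : ∀ s ∈ S, #((G.neighborFinset s).filter (· ∉ S)) = 2) (hS₂ : #S ≤ 2)
    (hv : v ∉ S) (hdeg : G.degree v ≤ 4) (hvS : ∃ s ∈ S, G.Adj v s) (hψ : ∀ u ∉ S, ψ u = φ u)
    (hinj : Set.InjOn ψ S)
    (hforb : ∀ s ∈ S, G.Adj v s → ψ s ∉ (G.outerColors S φ v).forbidden) :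
    (G.neighborColors ψ v).IsPCF 2 := by
  have hmem {s : V} : s ∈ (G.neighborFinset v).filter (· ∈ S) ↔ G.Adj v s ∧ s ∈ S := by simp
  have hpos : 0 < #((G.neighborFinset v).filter (· ∈ S)) := by
    obtain ⟨s, hs, hvs⟩ := hvS
    exact Finset.card_pos.mpr ⟨s, hmem.mpr ⟨hvs, hs⟩⟩
  have hle := Finset.card_le_card fun u (hu : u ∈ (G.neighborFinset v).filter (· ∈ S)) =>
    (hmem.mp hu).2
  obtain hone | htwo : #((G.neighborFinset v).filter (· ∈ S)) = 1 ∨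
      #((G.neighborFinset v).filter (· ∈ S)) = 2 := by omega
  · obtain ⟨s, hvS⟩ := Finset.card_eq_one.mp hone
    obtain ⟨hvs, hs⟩ := hmem.mp (hvS ▸ Finset.mem_singleton_self s)
    obtain ⟨t, hvt, hsS⟩ := Finset.exists_eq_pair_of_mem_of_card_eq_two (hS s hs)
      (a := v) (by simp [hvs.symm, hv])
    exact isPCF_neighborColors_of_filter_mem_eq_singleton hφ hv hvS hsS hvt hdeg hψ
      (hforb s hs hvs)
  · obtain ⟨s₁, s₂, hs, hvS⟩ := Finset.card_eq_two.mp htwo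
    obtain ⟨hvs₁, hs₁⟩ := (hmem (s := s₁)).mp (by simp [hvS])
    obtain ⟨hvs₂, hs₂⟩ := (hmem (s := s₂)).mp (by simp [hvS])
    exact isPCF_neighborColors_of_filter_mem_eq_pair hvS hs hdeg hψ (hinj.ne hs₁ hs₂ hs)
      (hforb s₁ hs₁ hvs₁) (hforb s₂ hs₂ hvs₂)

lemma IsPCFColoring.of_reduce {h : ℕ} {φ ψ : V → α} (hφ : (G.reduce S).IsPCFColoring h φ)
    (hψ : ∀ u ∉ S, ψ u = φ u) (hS : ∀ s ∈ S, Set.InjOn ψ ↑(insert s (G.neighborFinset s)))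
    (hnear : ∀ v ∉ S, (∃ s ∈ S, G.Adj v s) → (G.neighborColors ψ v).IsPCF h) :
    G.IsPCFColoring h ψ := by
  have hSadj {s u : V} (hs : s ∈ S) (hsu : G.Adj s u) : ψ s ≠ ψ u := fun heq =>
    hsu.ne (hS s hs (by simp) (by simp [hsu]) heq)
  rw [isPCFColoring_iff] at hφ ⊢
  refine ⟨fun u w huw => ?_, fun v => ?_⟩
  · by_cases hu : u ∈ S
    · exact hSadj hu huw
    by_cases hw : w ∈ S
    · exact (hSadj hw huw.symm).symm
    rw [hψ u hu, hψ w hw]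
    exact hφ.1 (reduce_adj_of_adj hu hw huw)
  by_cases hv : v ∈ S
  · exact Multiset.isPCF_map_of_injOn ((hS v hv).mono (by simp)) h
  by_cases hvS : ∃ s ∈ S, G.Adj v s
  · exact hnear v hv hvS
  simp only [not_exists, not_and] at hvS
  have hcolors : G.neighborColors ψ v = (G.reduce S).neighborColors φ v := by
    rw [neighborColors, neighborColors, neighborFinset_reduce_of_forall_not_adj hv hvS]
    refine Multiset.map_congr rfl fun u hu => hψ u fun huS => hvS u huS ?_
    simpa using hu
  exact hcolors ▸ hφ.2 v

lemma isPCFColoring_update_update {φ : V → α} {x x₁ y z a b : V} {c₀ c₁ : α}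
    [DecidableRel (G.reduce ↑({x, x₁} : Finset V)).Adj]
    (hφ : (G.reduce ↑({x, x₁} : Finset V)).IsPCFColoring 2 φ) (hdeg : ∀ v, G.degree v ≤ 4)
    (hNx : G.neighborFinset x = {x₁, y, z}) (hNx₁ : G.neighborFinset x₁ = {x, a, b})
    (hyz : y ≠ z) (hy : y ≠ x₁) (hz : z ≠ x₁) (hab : a ≠ b) (ha : a ≠ x) (hb : b ≠ x)
    (h₁ : c₁ ∉ {φ y, φ z, φ a, φ b} ∪ (G.outerColors {x, x₁} φ a).forbidden ∪
      (G.outerColors {x, x₁} φ b).forbidden)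
    (h₀ : c₀ ∉ {φ a, φ b, c₁} ∪ insert (φ z) (G.outerColors {x, x₁} φ y).forbidden ∪
      insert (φ y) (G.outerColors {x, x₁} φ z).forbidden) :
    G.IsPCFColoring 2 (Function.update (Function.update φ x c₀) x₁ c₁) := by
  set S : Finset V := {x, x₁}
  set ψ := Function.update (Function.update φ x c₀) x₁ c₁
  have hadj_x {u : V} : G.Adj x u ↔ u = x₁ ∨ u = y ∨ u = z := by
    rw [← mem_neighborFinset, hNx]; simp
  have hadj_x₁ {u : V} : G.Adj x₁ u ↔ u = x ∨ u = a ∨ u = b := by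
    rw [← mem_neighborFinset, hNx₁]; simp
  have hxx₁ : x ≠ x₁ := (hadj_x.mpr (by simp)).ne
  have hyS : y ∉ S := by simpa [S, hy] using (hadj_x.mpr (by simp)).ne'
  have hzS : z ∉ S := by simpa [S, hz] using (hadj_x.mpr (by simp)).ne'
  have haS : a ∉ S := by simpa [S, ha] using (hadj_x₁.mpr (by simp)).ne'
  have hbS : b ∉ S := by simpa [S, hb] using (hadj_x₁.mpr (by simp)).ne'
  have hψ (u : V) (hu : u ∉ S) : ψ u = φ u := by
    simp only [S, Finset.mem_insert, Finset.mem_singleton, not_or] at hu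
    simp [ψ, hu.1, hu.2]
  have hψx : ψ x = c₀ := by simp [ψ, hxx₁]
  have hψx₁ : ψ x₁ = c₁ := by simp [ψ]
  simp only [Finset.mem_union, Finset.mem_insert, Finset.mem_singleton, not_or] at h₀ h₁
  obtain ⟨⟨⟨h₀a, h₀b, h₀₁⟩, h₀z, h₀Fy⟩, h₀y, h₀Fz⟩ := h₀
  obtain ⟨⟨⟨h₁y, h₁z, h₁a, h₁b⟩, h₁Fa⟩, h₁Fb⟩ := h₁
  have hS₂ (s : V) (hs : s ∈ S) : #((G.neighborFinset s).filter (· ∉ S)) = 2 := by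
    obtain rfl | rfl : s = x ∨ s = x₁ := by simpa [S] using hs
    exacts [card_filter_notMem_eq_two hNx (by simp [S]) hyS hzS hyz,
      card_filter_notMem_eq_two hNx₁ (by simp [S]) haS hbS hab]
  have hinj : Set.InjOn ψ ↑S := by
    simpa [S, hψx, hψx₁] using fun h => absurd h h₀₁
  refine IsPCFColoring.of_reduce hφ hψ (fun s hs => ?_) fun v hv hvS =>
    isPCF_neighborColors_of_forall_notMem_forbidden ((isPCFColoring_iff.mp hφ).2 v) hS₂
      Finset.card_le_two hv (hdeg v) hvS hψ hinj fun s hs hvs => ?_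
  · obtain rfl | rfl : s = x ∨ s = x₁ := by simpa [S] using hs
    · exact injOn_insert_neighborFinset hφ hψ hNx hs hyS hzS hyz
        (by simp [hψx, hψx₁, h₀y, h₀z, h₀₁]) (by simp [hψx₁, h₁y, h₁z])
    · exact injOn_insert_neighborFinset hφ hψ hNx₁ hs haS hbS hab
        (by simp [hψx, hψx₁, h₁a, h₁b, Ne.symm h₀₁]) (by simp [hψx, h₀a, h₀b])
  · obtain ⟨hvx, hvx₁⟩ : v ≠ x ∧ v ≠ x₁ := by simpa [S] using hv
    obtain rfl | rfl : s = x ∨ s = x₁ := by simpa [S] using hs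
    · obtain rfl | rfl : v = y ∨ v = z := by simpa [hvx₁] using hadj_x.mp hvs.symm
      exacts [hψx ▸ h₀Fy, hψx ▸ h₀Fz]
    · obtain rfl | rfl : v = a ∨ v = b := by simpa [hvx] using hadj_x₁.mp hvs.symm
      exacts [hψx₁ ▸ h₁Fa, hψx₁ ▸ h₁Fb]

end SimpleGraph

theorem reduce_triangle_with_pendant_three_vertex {V : Type*} [Fintype V]
    (G : SimpleGraph V)
    (hΔ : ∀ u : V, {w | G.Adj u w}.ncard ≤ 4)
    (x y z x₁ : V)
    (hxy : G.Adj x y) (hyz : G.Adj y z) (hxz : G.Adj x z)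
    (hdx : {w | G.Adj x w}.ncard = 3)
    (hxx₁ : G.Adj x x₁) (hx₁y : x₁ ≠ y) (hx₁z : x₁ ≠ z)
    (hdx₁ : {w | G.Adj x₁ w}.ncard = 3)
    (h : (G.reduce {x, x₁}).HasPCFColoring 2 9) :
    G.HasPCFColoring 2 9 := by
  classical
  obtain ⟨φ, hφ⟩ := h
  rw [← Finset.coe_pair] at hφ
  have hcard (v : V) : #(G.neighborFinset v) = {w | G.Adj v w}.ncard := by
    rw [G.card_neighborFinset_eq_degree, ← SimpleGraph.ncard_neighborSet]
    rfl
  have hNx : G.neighborFinset x = {x₁, y, z} := by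
    refine (Finset.eq_of_subset_of_card_le (by simp [Finset.insert_subset_iff, hxy, hxz, hxx₁])
      ?_).symm
    rw [hcard, hdx, Finset.card_insert_of_notMem (by simp [hx₁y, hx₁z]), Finset.card_pair hyz.ne]
  obtain ⟨a, b, hab, hax, hbx, hNx₁⟩ := Finset.exists_eq_triple_of_mem_of_card_eq_three
    ((hcard x₁).trans hdx₁) ((G.mem_neighborFinset _ _).mpr hxx₁.symm)
  have hyS : y ∉ ({x, x₁} : Finset V) := by simp [hxy.ne', hx₁y.symm]
  have hzS : z ∉ ({x, x₁} : Finset V) := by simp [hxz.ne', hx₁z.symm]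
  obtain ⟨c₁, hc₁⟩ := Multiset.exists_notMem_union_forbidden (by simp) (φ y) (φ z) (φ a) (φ b)
    (G.outerColors {x, x₁} φ a) (G.outerColors {x, x₁} φ b)
  obtain ⟨c₀, hc₀⟩ := Multiset.exists_notMem_union_insert_forbidden (by simp) (φ a) (φ b) c₁
    (SimpleGraph.apply_mem_outerColors φ hyz hzS)
    (SimpleGraph.apply_mem_outerColors φ hyz.symm hyS)
  refine ⟨_, SimpleGraph.isPCFColoring_update_update hφ (fun v => ?_) hNx hNx₁ hyz.ne hx₁y.symm
    hx₁z.symm hab hax hbx hc₁ hc₀⟩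
  rw [← G.card_neighborFinset_eq_degree, hcard]
  exact hΔ v
end

section
/- Let G be a triangle-free simple graph with maximum degree at most 4 containing six pairwise distinct vertices v, x, y, z, u, w forming two 4-cycles v–x–y–z–v and v–u–w–z–v, where v has degree exactly 3 and x, z, u each have degree exactly 4. Let H be the graph obtained from G by deleting v and adding the edge xu (if it is not already present); note H has maximum degree at most 4. If H admits a 2-PCF 9-coloring, then G admits a 2-PCF 9-coloring. (This shows a vertex-minimum counterexample has no 3-vertex incident with two 4-faces.) -/
open Function Set

theorem Set.ncard_triple_le {β : Type*} (a b c : β) : ({a, b, c} : Set β).ncard ≤ 3 :=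
  (ncard_insert_le _ _).trans (Nat.add_le_add_right ((ncard_insert_le _ _).trans (by simp)) 1)

theorem Set.exists_notMem_of_ncard_lt {β : Type*} [Finite β] {s : Set β}
    (hs : s.ncard < Nat.card β) : ∃ c, c ∉ s := by
  rw [← ne_univ_iff_exists_notMem]
  rintro rfl
  exact hs.ne (ncard_univ β)

theorem Set.exists_eq_insert_pair_of_ncard_eq_three {β : Type*} {s : Set β} {a b : β}
    (ha : a ∈ s) (hb : b ∈ s) (hab : a ≠ b) (hs : s.ncard = 3) : ∃ c, s = {a, b, c} := by
  have hsub : {a, b} ⊆ s := insert_subset ha (singleton_subset_iff.2 hb)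
  obtain ⟨c, hc⟩ := ncard_eq_one.1 (by rw [ncard_sdiff hsub, hs, ncard_pair hab] :
    (s \ {a, b}).ncard = 1)
  refine ⟨c, ?_⟩
  rw [← union_sdiff_cancel hsub, hc, insert_union, singleton_union]

namespace SimpleGraph

variable {V α : Type*}

def uniqueColors (S : Set V) (φ : V → α) : Set α :=
  {c | {m | m ∈ S ∧ φ m = c}.ncard = 1}

/-- A vertex joined to `T` leaves `min h _` unique colors on the enlarged set as long as its
color avoids these. -/
def blockedColors (h : ℕ) (T : Set V) (φ : V → α) : Set α :=
  if h < (uniqueColors T φ).ncard then ∅ else φ '' T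

theorem isPCFColoring_iff_s11 {G : SimpleGraph V} {h : ℕ} {φ : V → α} :
    G.IsPCFColoring h φ ↔ (∀ ⦃a b⦄, G.Adj a b → φ a ≠ φ b) ∧
      ∀ n, min h (G.neighborSet n).ncard ≤ (uniqueColors (G.neighborSet n) φ).ncard :=
  Iff.rfl

theorem ncard_neighborSet_sdiff_le {G : SimpleGraph V} [Finite V] {n v : V} {k : ℕ}
    (hΔ : (G.neighborSet n).ncard ≤ k + 1) (hn : G.Adj n v) :
    (G.neighborSet n \ {v}).ncard ≤ k := by
  have := ncard_sdiff_singleton_add_one ((G.mem_neighborSet n v).2 hn)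
  omega

section UniqueColors

variable {S T : Set V} {φ ψ : V → α} {z : V} {c : α} {h : ℕ}

theorem mem_uniqueColors :
    c ∈ uniqueColors S φ ↔ ∃ m ∈ S, φ m = c ∧ ∀ m' ∈ S, φ m' = c → m' = m := by
  simp only [uniqueColors, mem_ofPred_eq, ncard_eq_one, Set.ext_iff, mem_singleton_iff]
  constructor
  · rintro ⟨m, hm⟩
    exact ⟨m, ((hm m).2 rfl).1, ((hm m).2 rfl).2, fun m' h₁ h₂ ↦ (hm m').1 ⟨h₁, h₂⟩⟩
  · rintro ⟨m, hmS, hmc, hu⟩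
    exact ⟨m, fun m' ↦ ⟨fun h ↦ hu m' h.1 h.2, by rintro rfl; exact ⟨hmS, hmc⟩⟩⟩

theorem uniqueColors_congr (hψ : EqOn ψ φ S) : uniqueColors S ψ = uniqueColors S φ := by
  have hfib (c : α) : {m | m ∈ S ∧ ψ m = c} = {m | m ∈ S ∧ φ m = c} :=
    Set.ext fun m ↦ and_congr_right fun hm ↦ by rw [hψ hm]
  simp only [uniqueColors, hfib]

theorem uniqueColors_subset_image : uniqueColors S φ ⊆ φ '' S := fun c hc ↦ by
  obtain ⟨m, hm, rfl, -⟩ := mem_uniqueColors.1 hc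
  exact mem_image_of_mem φ hm

theorem uniqueColors_eq_image (hφ : InjOn φ S) : uniqueColors S φ = φ '' S := by
  refine uniqueColors_subset_image.antisymm ?_
  rintro _ ⟨m, hm, rfl⟩
  exact mem_uniqueColors.2 ⟨m, hm, rfl, fun m' hm' he ↦ hφ hm' hm he⟩

theorem uniqueColors_insert_subset :
    uniqueColors (insert z T) φ ⊆ insert (φ z) (uniqueColors T φ) := by
  intro c hc
  obtain ⟨m, hm, rfl, hu⟩ := mem_uniqueColors.1 hc
  rcases eq_or_ne m z with rfl | hmz
  · exact mem_insert _ _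
  refine mem_insert_of_mem _ (mem_uniqueColors.2 ⟨m, hm.resolve_left hmz, rfl, fun m' hm' he ↦ ?_⟩)
  exact hu m' (mem_insert_of_mem _ hm') he

theorem uniqueColors_sdiff_subset_insert (hψ : EqOn ψ φ T) :
    uniqueColors T φ \ {ψ z} ⊆ uniqueColors (insert z T) ψ := by
  rintro c ⟨hc, hcz⟩
  obtain ⟨m, hm, rfl, hu⟩ := mem_uniqueColors.1 hc
  refine mem_uniqueColors.2 ⟨m, mem_insert_of_mem _ hm, hψ hm, fun m' hm' he ↦ ?_⟩
  rcases hm' with rfl | hm'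
  · exact absurd he.symm hcz
  · exact hu m' hm' ((hψ hm').symm.trans he)

theorem insert_uniqueColors_subset (hψ : EqOn ψ φ T) (hz : ψ z ∉ φ '' T) :
    insert (ψ z) (uniqueColors T φ) ⊆ uniqueColors (insert z T) ψ := by
  refine insert_subset (mem_uniqueColors.2 ⟨z, mem_insert _ _, rfl, fun m hm he ↦ ?_⟩) ?_
  · exact hm.resolve_right fun hmT ↦ hz ⟨m, hmT, (hψ hmT).symm.trans he⟩
  · exact fun c hc ↦ uniqueColors_sdiff_subset_insert hψ
      ⟨hc, fun e ↦ hz (uniqueColors_subset_image (e ▸ hc))⟩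

theorem blockedColors_eq_empty (hT : h < (uniqueColors T φ).ncard) : blockedColors h T φ = ∅ :=
  if_pos hT

theorem ncard_uniqueColors_of_injOn (hφ : InjOn φ S) : (uniqueColors S φ).ncard = S.ncard := by
  rw [uniqueColors_eq_image hφ, hφ.ncard_image]

variable [Finite V]

instance finite_uniqueColors (S : Set V) (φ : V → α) : Finite (uniqueColors S φ) :=
  ((toFinite S).image φ |>.subset uniqueColors_subset_image).to_subtype

theorem ncard_uniqueColors_insert_le :
    (uniqueColors (insert z T) φ).ncard ≤ (uniqueColors T φ).ncard + 1 :=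
  (ncard_le_ncard uniqueColors_insert_subset).trans (ncard_insert_le _ _)

theorem min_ncard_add_one_le_of_insert
    (hz : min h (insert z T).ncard ≤ (uniqueColors (insert z T) φ).ncard) :
    min h (T.ncard + 1) ≤ (uniqueColors T φ).ncard + 1 := by
  by_cases hzT : z ∈ T
  · rw [insert_eq_of_mem hzT] at hz
    omega
  · rw [ncard_insert_of_notMem hzT] at hz
    exact hz.trans ncard_uniqueColors_insert_le

/-- A non-unique color occurs at least twice, so `S` never has exactly one vertex whose color is
not unique. -/
theorem injOn_of_ncard_le_ncard_uniqueColors_add_one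
    (hS : S.ncard ≤ (uniqueColors S φ).ncard + 1) : InjOn φ S := by
  intro a ha b hb hab
  by_contra hne
  have hsub : uniqueColors S φ ⊆ φ '' (S \ {a, b}) := by
    intro c hc
    obtain ⟨m, hm, rfl, hu⟩ := mem_uniqueColors.1 hc
    refine ⟨m, ⟨hm, ?_⟩, rfl⟩
    rintro (rfl | rfl)
    · exact hne (hu b hb hab.symm).symm
    · exact hne (hu a ha hab)
  have hab2 : ({a, b} : Set V) ⊆ S := insert_subset ha (singleton_subset_iff.2 hb)
  have h₁ := (ncard_le_ncard hsub).trans ncard_image_le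
  have h₂ := ncard_le_ncard hab2
  rw [ncard_sdiff hab2, ncard_pair hne] at h₁
  rw [ncard_pair hne] at h₂
  omega

theorem lt_ncard_uniqueColors_of_ncard_eq (hT : T.ncard = h + 1)
    (hu : h ≤ (uniqueColors T φ).ncard) : h < (uniqueColors T φ).ncard := by
  have hinj := injOn_of_ncard_le_ncard_uniqueColors_add_one (φ := φ) (by omega : T.ncard ≤ _)
  rw [ncard_uniqueColors_of_injOn hinj]
  omega

/-- The unique colors of `insert z T` are unique on `T` and differ from `φ z`, so `T` has at most
one vertex of non-unique color, hence is rainbow, and `φ z` is one more unique color of `T`. -/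
theorem lt_ncard_uniqueColors_of_mem_image (hzT : z ∉ T) (hz : φ z ∈ φ '' T)
    (hT : T.ncard ≤ h + 1) (hu : h ≤ (uniqueColors (insert z T) φ).ncard) :
    h < (uniqueColors T φ).ncard := by
  have hzu : φ z ∉ uniqueColors (insert z T) φ := by
    obtain ⟨a, ha, haz⟩ := hz
    intro hmem
    obtain ⟨m, -, -, hu⟩ := mem_uniqueColors.1 hmem
    have := (hu a (mem_insert_of_mem _ ha) haz).trans (hu z (mem_insert _ _) rfl).symm
    exact hzT (this ▸ ha)
  have hsub : uniqueColors (insert z T) φ ⊆ uniqueColors T φ \ {φ z} := fun c hc ↦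
    ⟨(uniqueColors_insert_subset hc).resolve_left (by rintro rfl; exact hzu hc),
      by rintro rfl; exact hzu hc⟩
  have h₁ := hu.trans (ncard_le_ncard hsub)
  have h₂ := ncard_le_ncard (sdiff_subset (s := uniqueColors T φ) (t := {φ z}))
  have hinj : InjOn φ T := injOn_of_ncard_le_ncard_uniqueColors_add_one (by omega)
  have := ncard_sdiff_singleton_add_one (uniqueColors_eq_image hinj ▸ hz)
  omega

theorem ncard_blockedColors_le (hT : T.ncard ≤ h + 1) : (blockedColors h T φ).ncard ≤ h := by
  unfold blockedColors
  split_ifs with hlt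
  · simp
  by_contra! hgt
  have hle := ncard_image_le (f := φ) (s := T)
  have hinj : InjOn φ T := injOn_of_ncard_image_eq (by omega)
  rw [uniqueColors_eq_image hinj] at hlt
  exact hlt hgt

theorem ncard_insert_blockedColors_le (hh : h ≠ 0) {a : V} (ha : a ∈ T) (hT : T.ncard ≤ h + 1) :
    (insert (φ a) (blockedColors h T φ)).ncard ≤ h := by
  by_cases hlt : h < (uniqueColors T φ).ncard
  · rw [blockedColors_eq_empty hlt, insert_empty_eq, ncard_singleton]
    omega
  · rw [insert_eq_of_mem (by simpa [blockedColors, hlt] using mem_image_of_mem φ ha)]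
    exact ncard_blockedColors_le hT

theorem min_le_ncard_uniqueColors_insert (hzT : z ∉ T) (hψ : EqOn ψ φ T)
    (hT : min h (T.ncard + 1) ≤ (uniqueColors T φ).ncard + 1)
    (hz : ψ z ∉ blockedColors h T φ) :
    min h (insert z T).ncard ≤ (uniqueColors (insert z T) ψ).ncard := by
  rw [ncard_insert_of_notMem hzT]
  unfold blockedColors at hz
  split_ifs at hz with hlt
  · have := ncard_le_ncard (uniqueColors_sdiff_subset_insert (z := z) hψ)
    have := pred_ncard_le_ncard_sdiff_singleton (uniqueColors T φ) (ψ z)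
    omega
  · have hnot : ψ z ∉ uniqueColors T φ := fun h ↦ hz (uniqueColors_subset_image h)
    calc min h (T.ncard + 1) ≤ (uniqueColors T φ).ncard + 1 := hT
      _ = (insert (ψ z) (uniqueColors T φ)).ncard := (ncard_insert_of_notMem hnot).symm
      _ ≤ _ := ncard_le_ncard (insert_uniqueColors_subset hψ hz)

end UniqueColors

theorem lt_ncard_uniqueColors_sdiff_of_eq [Finite V] {G : SimpleGraph V} {φ : V → α} {x y z : V}
    (hφ : G.IsPCFColoring 2 φ) (hΔ : (G.neighborSet y).ncard ≤ 4) (hxy : G.Adj x y) (hzy : G.Adj z y) (hxz : x ≠ z)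
    (hzx : φ z = φ x) : 2 < (uniqueColors (G.neighborSet y \ {z}) φ).ncard := by
  refine lt_ncard_uniqueColors_of_mem_image (fun h ↦ h.2 rfl) ⟨x, ⟨hxy.symm, hxz⟩, hzx.symm⟩
    (ncard_neighborSet_sdiff_le hΔ hzy.symm) ?_
  have h2 : 2 ≤ (G.neighborSet y).ncard := by
    rw [← ncard_pair hxz]
    exact ncard_le_ncard (insert_subset hxy.symm (singleton_subset_iff.2 hzy.symm))
  have := (isPCFColoring_iff_s11.1 hφ).2 y
  rw [min_eq_left h2] at this
  rwa [insert_sdiff_singleton, insert_eq_of_mem ((G.mem_neighborSet y z).2 hzy.symm)]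

section Recoloring

variable [Finite V] [DecidableEq V] {G : SimpleGraph V} {h : ℕ} {φ : V → α} {v : V} {c : α}

theorem isPCFColoring_update
    (hprop : ∀ ⦃a b⦄, G.Adj a b → a ≠ v → b ≠ v → φ a ≠ φ b)
    (hfar : ∀ n, ¬G.Adj n v →
      min h (G.neighborSet n).ncard ≤ (uniqueColors (G.neighborSet n) φ).ncard)
    (hnear : ∀ n, G.Adj v n → c ≠ φ n ∧ c ∉ blockedColors h (G.neighborSet n \ {v}) φ ∧
      min h ((G.neighborSet n \ {v}).ncard + 1) ≤
        (uniqueColors (G.neighborSet n \ {v}) φ).ncard + 1) :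
    G.IsPCFColoring h (update φ v c) := by
  have hoff : ∀ a ≠ v, update φ v c a = φ a := fun a ha ↦ update_of_ne ha _ _
  refine isPCFColoring_iff_s11.2 ⟨fun a b hab ↦ ?_, fun n ↦ ?_⟩
  · rcases eq_or_ne a v with rfl | ha
    · rw [update_self, hoff b hab.ne.symm]
      exact (hnear b hab).1
    rcases eq_or_ne b v with rfl | hb
    · rw [update_self, hoff a ha]
      exact (hnear a hab.symm).1.symm
    rw [hoff a ha, hoff b hb]
    exact hprop hab ha hb
  by_cases hn : G.Adj n v
  · obtain ⟨-, hblock, hmin⟩ := hnear n hn.symm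
    rw [← insert_eq_of_mem ((G.mem_neighborSet n v).2 hn), ← insert_sdiff_singleton]
    refine min_le_ncard_uniqueColors_insert (fun h ↦ h.2 rfl) (fun a ha ↦ hoff a ha.2) hmin ?_
    rwa [update_self]
  · rw [uniqueColors_congr fun a ha ↦ hoff a (by rintro rfl; exact hn ha)]
    exact hfar n hn

theorem IsPCFColoring.update (hφ : G.IsPCFColoring h φ)
    (hc : ∀ n, G.Adj v n → c ≠ φ n ∧ c ∉ blockedColors h (G.neighborSet n \ {v}) φ) :
    G.IsPCFColoring h (update φ v c) := by
  rw [isPCFColoring_iff_s11] at hφ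
  refine isPCFColoring_update (fun a b hab _ _ ↦ hφ.1 hab) (fun n _ ↦ hφ.2 n)
    fun n hn ↦ ⟨(hc n hn).1, (hc n hn).2, min_ncard_add_one_le_of_insert (z := v) ?_⟩
  rw [insert_sdiff_singleton, insert_eq_of_mem ((G.mem_neighborSet n v).2 hn.symm)]
  exact hφ.2 n

end Recoloring

def IsDeleteJoin (G H : SimpleGraph V) (v x u : V) : Prop :=
  ∀ a b, H.Adj a b ↔ (G.Adj a b ∧ a ≠ v ∧ b ≠ v) ∨ (a = x ∧ b = u) ∨ (a = u ∧ b = x)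

namespace IsDeleteJoin

variable {G H : SimpleGraph V} {v x z u n : V}

theorem symm (hH : IsDeleteJoin G H v x u) : IsDeleteJoin G H v u x :=
  fun a b ↦ (hH a b).trans (or_congr_right or_comm)

theorem adj (hH : IsDeleteJoin G H v x u) {a b : V} (hab : G.Adj a b) (ha : a ≠ v)
    (hb : b ≠ v) : H.Adj a b :=
  (hH a b).2 (Or.inl ⟨hab, ha, hb⟩)

theorem adj_left_right (hH : IsDeleteJoin G H v x u) : H.Adj x u :=
  (hH x u).2 (Or.inr (Or.inl ⟨rfl, rfl⟩))

theorem neighborSet_subset (hH : IsDeleteJoin G H v x u) (hnx : n ≠ x) (hnu : n ≠ u) :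
    H.neighborSet n ⊆ G.neighborSet n :=
  fun b hb ↦ by grind [hH n b, mem_neighborSet]

theorem neighborSet_eq (hH : IsDeleteJoin G H v x u) (hnv : n ≠ v) (hnx : n ≠ x)
    (hnu : n ≠ u) : H.neighborSet n = G.neighborSet n \ {v} := by
  ext b
  grind [hH n b, mem_neighborSet]

theorem neighborSet_left (hH : IsDeleteJoin G H v x u) (hxv : x ≠ v) :
    H.neighborSet x = insert u (G.neighborSet x \ {v}) := by
  ext b
  grind [hH x b, mem_neighborSet]

theorem ncard_neighborSet_le [Finite V] (hH : IsDeleteJoin G H v x u) {k : ℕ}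
    (hΔ : ∀ a, (G.neighborSet a).ncard ≤ k) (hxv : G.Adj x v) (huv : G.Adj u v) (n : V) :
    (H.neighborSet n).ncard ≤ k := by
  have hjoin {a q : V} (hav : G.Adj a v) : (insert q (G.neighborSet a \ {v})).ncard ≤ k :=
    (ncard_insert_le _ _).trans <| (ncard_sdiff_singleton_add_one hav).trans_le (hΔ a)
  rcases eq_or_ne n x with rfl | hnx
  · exact hH.neighborSet_left hxv.ne ▸ hjoin hxv
  rcases eq_or_ne n u with rfl | hnu
  · exact hH.symm.neighborSet_left huv.ne ▸ hjoin huv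
  exact (ncard_le_ncard (hH.neighborSet_subset hnx hnu)).trans (hΔ n)

theorem isPCFColoring_update [Finite V] [DecidableEq V] {h : ℕ} {φ : V → α} {c : α}
    (hH : IsDeleteJoin G H v x u) (hNv : G.neighborSet v = {x, z, u})
    (hφ : H.IsPCFColoring h φ) (hinj : InjOn φ {x, z, u})
    (hz : h < (uniqueColors (G.neighborSet z \ {v}) φ).ncard) (hc : c ∉ φ '' {x, z, u})
    (hcx : c ∉ blockedColors h (G.neighborSet x \ {v}) φ)
    (hcu : c ∉ blockedColors h (G.neighborSet u \ {v}) φ) :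
    G.IsPCFColoring h (update φ v c) := by
  rw [isPCFColoring_iff_s11] at hφ
  have hv : ∀ {n}, G.Adj v n ↔ n ∈ ({x, z, u} : Set V) := by
    intro n
    rw [← mem_neighborSet, hNv]
  refine SimpleGraph.isPCFColoring_update (fun a b hab ha hb ↦ hφ.1 (hH.adj hab ha hb))
    (fun n hn ↦ ?_) fun n hn ↦ ⟨fun e ↦ hc ⟨n, hv.1 hn, e.symm⟩, ?_⟩
  · rcases eq_or_ne n v with rfl | hnv
    · rw [hNv, ncard_uniqueColors_of_injOn hinj]
      exact min_le_right _ _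
    have hnx : n ≠ x := by rintro rfl; exact hn (hv.2 (mem_insert _ _)).symm
    have hnu : n ≠ u := by rintro rfl; exact hn (hv.2 (by simp)).symm
    have := hφ.2 n
    rwa [hH.neighborSet_eq hnv hnx hnu, sdiff_singleton_eq_self (s := G.neighborSet n) hn] at this
  · rcases hv.1 hn with rfl | rfl | rfl
    · refine ⟨hcx, min_ncard_add_one_le_of_insert (z := u) ?_⟩
      rw [← hH.neighborSet_left hn.ne']
      exact hφ.2 n
    · exact ⟨blockedColors_eq_empty hz ▸ notMem_empty c, by omega⟩
    · refine ⟨hcu, min_ncard_add_one_le_of_insert (z := x) ?_⟩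
      rw [← hH.symm.neighborSet_left hn.ne']
      exact hφ.2 n

end IsDeleteJoin

section NineColors

variable [Finite V] [DecidableEq V] {H : SimpleGraph V} {φ : V → Fin 9} {x y z u w t : V}

theorem exists_isPCFColoring_update_ne (hφ : H.IsPCFColoring 2 φ)
    (hΔ : ∀ a, (H.neighborSet a).ncard ≤ 4) (hNz : H.neighborSet z = {y, w, t})
    (hxy : H.Adj x y) (huw : H.Adj u w) (hxz : x ≠ z) (huz : u ≠ z) (hzx : φ z = φ x) :
    ∃ c, c ≠ φ x ∧ c ≠ φ u ∧ H.IsPCFColoring 2 (update φ z c) := by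
  have hz : ∀ {n}, H.Adj z n ↔ n = y ∨ n = w ∨ n = t := by
    intro n
    rw [← mem_neighborSet, hNz, mem_insert_iff, mem_insert_iff, mem_singleton_iff]
  have hT {n} (hn : H.Adj z n) : (H.neighborSet n \ {z}).ncard ≤ 3 :=
    ncard_neighborSet_sdiff_le (hΔ n) hn.symm
  set Bw := blockedColors 2 (H.neighborSet w \ {z}) φ
  set Bt := blockedColors 2 (H.neighborSet t \ {z}) φ
  obtain ⟨c, hc⟩ : ∃ c, c ∉ ({φ x, φ y, φ w} ∪ insert (φ u) Bw ∪ insert (φ t) Bt) := by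
    refine exists_notMem_of_ncard_lt ?_
    calc _ ≤ ({φ x, φ y, φ w} : Set (Fin 9)).ncard + (insert (φ u) Bw).ncard + (Bt.ncard + 1) :=
          (ncard_union_le _ _).trans (add_le_add (ncard_union_le _ _) (ncard_insert_le _ _))
      _ ≤ 3 + 2 + (2 + 1) := by
          gcongr
          · exact ncard_triple_le _ _ _
          · exact ncard_insert_blockedColors_le two_ne_zero ⟨huw.symm, huz⟩
              (hT (hz.2 (Or.inr (Or.inl rfl))))
          · exact ncard_blockedColors_le (hT (hz.2 (Or.inr (Or.inr rfl))))
      _ < Nat.card (Fin 9) := by rw [Nat.card_fin]; norm_num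
  simp only [mem_union, mem_insert_iff, mem_singleton_iff, not_or] at hc
  obtain ⟨⟨⟨hcx, hcy, hcw⟩, hcu, hcBw⟩, hct⟩ := hc
  refine ⟨c, hcx, hcu, hφ.update fun n hn ↦ ?_⟩
  rcases hz.1 hn with rfl | rfl | rfl
  · rw [blockedColors_eq_empty (lt_ncard_uniqueColors_sdiff_of_eq hφ (hΔ n) hxy hn hxz hzx)]
    exact ⟨hcy, notMem_empty c⟩
  · exact ⟨hcw, hcBw⟩
  · exact hct

theorem exists_rainbow_of_isPCFColoring (hφ : H.IsPCFColoring 2 φ)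
    (hΔ : ∀ a, (H.neighborSet a).ncard ≤ 4) (hNz : H.neighborSet z = {y, w, t})
    (hxy : H.Adj x y) (huw : H.Adj u w) (hxz : x ≠ z) (huz : u ≠ z) :
    ∃ φ' : V → Fin 9, H.IsPCFColoring 2 φ' ∧ φ' z ≠ φ' x ∧ φ' z ≠ φ' u := by
  by_cases hzx : φ z = φ x
  · obtain ⟨c, hcx, hcu, hc⟩ := exists_isPCFColoring_update_ne hφ hΔ hNz hxy huw hxz huz hzx
    exact ⟨_, hc, by simpa [update_of_ne hxz], by simpa [update_of_ne huz]⟩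
  by_cases hzu : φ z = φ u
  · obtain ⟨c, hcu, hcx, hc⟩ :=
      exists_isPCFColoring_update_ne hφ hΔ (hNz.trans (insert_comm _ _ _)) huw hxy huz hxz hzu
    exact ⟨_, hc, by simpa [update_of_ne hxz], by simpa [update_of_ne huz]⟩
  exact ⟨φ, hφ, hzx, hzu⟩

theorem IsDeleteJoin.hasPCFColoring {G : SimpleGraph V} {v : V} (hH : IsDeleteJoin G H v x u)
    (hΔ : ∀ a, (G.neighborSet a).ncard ≤ 4) (hNv : G.neighborSet v = {x, z, u})
    (hdz : (G.neighborSet z).ncard = 4) (hφ : H.IsPCFColoring 2 φ) (hzx : φ z ≠ φ x)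
    (hzu : φ z ≠ φ u) : G.HasPCFColoring 2 9 := by
  have hv : ∀ {n}, n ∈ ({x, z, u} : Set V) → G.Adj n v := fun hn ↦ (hNv ▸ hn : _).symm
  have hxu : φ x ≠ φ u := (isPCFColoring_iff_s11.1 hφ).1 hH.adj_left_right
  have hinj : InjOn φ {x, z, u} := by
    rintro a (rfl | rfl | rfl) b (rfl | rfl | rfl) hab <;>
      first | rfl | exact absurd hab ‹_› | exact absurd hab.symm ‹_›
  have hz : 2 < (uniqueColors (G.neighborSet z \ {v}) φ).ncard := by
    have hTz : (G.neighborSet z \ {v}).ncard = 3 := by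
      rw [ncard_sdiff_singleton_of_mem ((G.mem_neighborSet z v).2 (hv (by simp))), hdz]
    refine lt_ncard_uniqueColors_of_ncard_eq hTz ?_
    have := (isPCFColoring_iff_s11.1 hφ).2 z
    rwa [hH.neighborSet_eq (hv (n := z) (by simp)).ne (fun e ↦ hzx (congrArg φ e))
      (fun e ↦ hzu (congrArg φ e)), hTz] at this
  set Bx := blockedColors 2 (G.neighborSet x \ {v}) φ
  set Bu := blockedColors 2 (G.neighborSet u \ {v}) φ
  obtain ⟨c, hc⟩ : ∃ c, c ∉ φ '' {x, z, u} ∪ Bx ∪ Bu := by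
    refine exists_notMem_of_ncard_lt ?_
    calc _ ≤ (φ '' {x, z, u}).ncard + Bx.ncard + Bu.ncard :=
          (ncard_union_le _ _).trans (Nat.add_le_add_right (ncard_union_le _ _) _)
      _ ≤ 3 + 2 + 2 := by
          gcongr
          · exact le_trans ncard_image_le (ncard_triple_le _ _ _)
          · exact ncard_blockedColors_le (ncard_neighborSet_sdiff_le (hΔ x) (hv (n := x) (by simp)))
          · exact ncard_blockedColors_le (ncard_neighborSet_sdiff_le (hΔ u) (hv (n := u) (by simp)))
      _ < Nat.card (Fin 9) := by rw [Nat.card_fin]; norm_num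
  simp only [mem_union, not_or] at hc
  exact ⟨_, hH.isPCFColoring_update hNv hφ hinj hz hc.1.1 hc.1.2 hc.2⟩

end NineColors

end SimpleGraph

open SimpleGraph

theorem reduce_three_vertex_on_two_four_cycles_general {V : Type*} [Fintype V]
    (G : SimpleGraph V)
    (hΔ : ∀ a : V, {b | G.Adj a b}.ncard ≤ 4)
    (v x y z u w : V)
    (hdist : List.Pairwise (· ≠ ·) [v, x, y, z, u, w])
    (hvx : G.Adj v x) (hxy : G.Adj x y) (hyz : G.Adj y z) (hzv : G.Adj z v)
    (hvu : G.Adj v u) (huw : G.Adj u w) (hwz : G.Adj w z)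
    (hdv : {a | G.Adj v a}.ncard = 3)
    (hdz : {a | G.Adj z a}.ncard = 4)
    (H : SimpleGraph V)
    (hH : ∀ a b : V, H.Adj a b ↔
      ((G.Adj a b ∧ a ≠ v ∧ b ≠ v) ∨ (a = x ∧ b = u) ∨ (a = u ∧ b = x)))
    (h : H.HasPCFColoring 2 9) :
    G.HasPCFColoring 2 9 := by
  classical
  obtain ⟨φ, hφ⟩ := h
  have hJ : G.IsDeleteJoin H v x u := hH
  simp only [List.pairwise_cons, List.mem_cons, forall_eq_or_imp, List.not_mem_nil] at hdist
  obtain ⟨⟨-, hvy, -, -, hvw, -⟩, ⟨-, hxz, hxu, -, -⟩, ⟨-, -, hyw, -⟩, ⟨hzu, -, -⟩, -⟩ := hdist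
  have hNv : G.neighborSet v = {x, z, u} := by
    refine (eq_of_subset_of_ncard_le ?_ ?_).symm
    · rintro _ (rfl | rfl | rfl)
      exacts [hvx, hzv.symm, hvu]
    · rw [ncard_eq_three.2 ⟨x, z, u, hxz, hxu, hzu, rfl⟩]
      exact hdv.le
  obtain ⟨t, hNz⟩ : ∃ t, H.neighborSet z = {y, w, t} := by
    rw [hJ.neighborSet_eq hzv.ne hxz.symm hzu]
    refine exists_eq_insert_pair_of_ncard_eq_three ⟨hyz.symm, hvy.symm⟩ ⟨hwz.symm, hvw.symm⟩ hyw ?_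
    rw [ncard_sdiff_singleton_of_mem ((G.mem_neighborSet z v).2 hzv)]
    exact congrArg (· - 1) hdz
  obtain ⟨φ', hφ', hzx, hzu⟩ := exists_rainbow_of_isPCFColoring hφ
    (hJ.ncard_neighborSet_le hΔ hvx.symm hvu.symm) hNz (hJ.adj hxy hvx.ne' hvy.symm)
    (hJ.adj huw hvu.ne' hvw.symm) hxz hzu.symm
  exact hJ.hasPCFColoring hΔ hNv hdz hφ' hzx hzu

theorem reduce_three_vertex_on_two_four_cycles {V : Type*} [Fintype V]
    (G : SimpleGraph V)
    (hΔ : ∀ a : V, {b | G.Adj a b}.ncard ≤ 4)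
    (htf : G.CliqueFree 3)
    (v x y z u w : V)
    (hdist : List.Pairwise (· ≠ ·) [v, x, y, z, u, w])
    (hvx : G.Adj v x) (hxy : G.Adj x y) (hyz : G.Adj y z) (hzv : G.Adj z v)
    (hvu : G.Adj v u) (huw : G.Adj u w) (hwz : G.Adj w z)
    (hdv : {a | G.Adj v a}.ncard = 3)
    (hdx : {a | G.Adj x a}.ncard = 4)
    (hdz : {a | G.Adj z a}.ncard = 4)
    (hdu : {a | G.Adj u a}.ncard = 4)
    (H : SimpleGraph V)
    (hH : ∀ a b : V, H.Adj a b ↔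
      ((G.Adj a b ∧ a ≠ v ∧ b ≠ v) ∨ (a = x ∧ b = u) ∨ (a = u ∧ b = x)))
    (h : H.HasPCFColoring 2 9) :
    G.HasPCFColoring 2 9 :=
  reduce_three_vertex_on_two_four_cycles_general G hΔ v x y z u w hdist hvx hxy hyz hzv hvu huw hwz
    hdv hdz H hH h
end
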